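/- arXiv:2007.11278 — 3 statements merged into one kernel-verified Lean document; each statement's English description precedes it below -/
import Mathlib

section
/- Let A = {0, 1, 3, 7} and B = {0, 1, 5, 7} be subsets of the real line ℝ with the Euclidean metric. Then the 0-dimensional persistence diagrams of the sublevel filtrations of the distance functions to A and to B are equal, both being the multiset {(0, 0.5), (0, 1), (0, 2), (0, +∞)}, but the mergegrams differ: MG(Δ_SL(A)) = {(0, 0.5), (0, 0.5), (0, 1), (0.5, 1), (0, 2), (1, 2), (2, +∞)} while MG(Δ_SL(B)) = {(0, 0.5), (0, 0.5), (0, 1), (0, 1), (0.5, 2), (1, 2), (2, +∞)}. Hence the mergegram of the single-linkage dendrogram is a strictly stronger isometry invariant than the 0-dimensional persistence diagram. -/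
open Classical

variable {X : Type*} [MetricSpace X]

/-- Single-linkage relation at scale `s`: a chain of points of `A` with consecutive
distances at most `2*s`. -/
def slRel (A : Set X) (s : ℝ) : X → X → Prop :=
  Relation.ReflTransGen (fun x y => x ∈ A ∧ y ∈ A ∧ dist x y ≤ 2 * s)

/-- The single-linkage cluster of a point `a` at scale `s`. -/
def slCluster (A : Set X) (s : ℝ) (a : X) : Set X := {b ∈ A | slRel A s a b}

/-- The single-linkage partition `Δ_SL(A;s)`. -/
def slPartition (A : Set X) (s : ℝ) : Set (Set X) := {C | ∃ a ∈ A, C = slCluster A s a}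

/-- The sublevel set `X_s^f = f⁻¹(-∞, s]` of the distance function `f(p) = d(p, A)`. -/
def sublevel (A : Set X) (s : ℝ) : Set X := {p : X | Metric.infDist p A ≤ s}

theorem sublevel_mono (A : Set X) {s t : ℝ} (h : s ≤ t) : sublevel A s ⊆ sublevel A t :=
  fun _ hp => le_trans hp h

/-- `H_0` of the sublevel set at scale `s` with `ℤ/2` coefficients: the vector space
generated by the connected components. -/
abbrev PH0Carrier (A : Set X) (s : ℝ) : Type _ :=
  ConnectedComponents ↥(sublevel A s) →₀ ZMod 2

/-- The map `H_0(X_s^f) → H_0(X_t^f)` induced by the inclusion of sublevel sets. -/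
noncomputable def ph0Map (A : Set X) {s t : ℝ} (h : s ≤ t) :
    PH0Carrier A s →ₗ[ZMod 2] PH0Carrier A t :=
  Finsupp.lmapDomain (ZMod 2) (ZMod 2)
    (Continuous.connectedComponentsMap (continuous_inclusion (sublevel_mono A h)))

/-- The carrier of the interval module `I(J)` for a predicate `J : ℝ → Prop`. -/
abbrev IntCarrier (J : ℝ → Prop) (t : ℝ) : Type := PLift (J t) → ZMod 2

/-- The structure map of the interval module `I(J)`: the identity if `s, t ∈ J`
and `0` otherwise. -/
noncomputable def intMap (J : ℝ → Prop) {s t : ℝ} (_h : s ≤ t) :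
    IntCarrier J s →ₗ[ZMod 2] IntCarrier J t where
  toFun f := fun _ht => if hs : J s then f ⟨hs⟩ else 0
  map_add' f g := by
    funext ht; by_cases hs : J s <;> simp [hs]
  map_smul' c f := by
    funext ht; by_cases hs : J s <;> simp [hs]

/-- The carrier of a (finite) direct sum of interval modules. -/
abbrev SumCarrier {ι : Type*} (J : ι → ℝ → Prop) (t : ℝ) : Type _ :=
  ∀ i : ι, IntCarrier (J i) t

/-- The structure map of a direct sum of interval modules. -/
noncomputable def sumMap {ι : Type*} (J : ι → ℝ → Prop) {s t : ℝ} (h : s ≤ t) :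
    SumCarrier J s →ₗ[ZMod 2] SumCarrier J t where
  toFun f := fun i => intMap (J i) h (f i)
  map_add' f g := funext fun i => map_add (intMap (J i) h) (f i) (g i)
  map_smul' c f := funext fun i => map_smul (intMap (J i) h) c (f i)

/-- The half-open life interval `[b, d)` with possibly infinite death, as a predicate. -/
def lifePred (b : ℝ) (d : EReal) (t : ℝ) : Prop := b ≤ t ∧ (t : EReal) < d

/-- `P` is the 0-dimensional persistence diagram of the sublevel filtration of the
distance function to `A`: the persistence module `s ↦ H_0(X_s^f; ℤ/2)` is isomorphic
to the direct sum of the interval modules `I[b, d)` over all dots `(b, d) ∈ P`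
(counted with multiplicity), all dots lying strictly above the diagonal. -/
def IsPersistenceDiagramOf (A : Set X) (P : Multiset (ℝ × EReal)) : Prop :=
  ∃ (n : ℕ) (f : Fin n → ℝ × EReal),
    Multiset.map f Finset.univ.val = P ∧
    (∀ i, ((f i).1 : EReal) < (f i).2) ∧
    ∃ e : ∀ t : ℝ, PH0Carrier A t ≃ₗ[ZMod 2] SumCarrier (fun i => lifePred (f i).1 (f i).2) t,
      ∀ (s t : ℝ) (h : s ≤ t) (x : PH0Carrier A s),
        e t (ph0Map A h x) = sumMap (fun i => lifePred (f i).1 (f i).2) h (e s x)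

attribute [local instance] Classical.propDecidable

/-- The merge sets of the single-linkage dendrogram of `A`: all blocks that appear in
some partition `Δ_SL(A;s)`, `s ≥ 0`. -/
def slBlocks (A : Set X) : Set (Set X) := {B | ∃ s : ℝ, 0 ≤ s ∧ B ∈ slPartition A s}

theorem slBlocks_finite {A : Set X} (hA : A.Finite) : (slBlocks A).Finite := by
  apply Set.Finite.subset hA.finite_subsets
  rintro B ⟨s, _, a, ha, rfl⟩
  exact fun x hx => hx.1

/-- The birth scale of a merge set: the first scale at which it appears. -/
noncomputable def slBirth (A : Set X) (B : Set X) : ℝ :=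
  sInf {s : ℝ | 0 ≤ s ∧ B ∈ slPartition A s}

/-- The death scale of a merge set: the supremum (possibly `+∞`) of the scales at which
it is still a block, i.e. the scale at which it merges into a strictly larger block. -/
noncomputable def slDeath (A : Set X) (B : Set X) : EReal :=
  sSup ((fun s : ℝ => (s : EReal)) '' {s : ℝ | 0 ≤ s ∧ B ∈ slPartition A s})

/-- The mergegram of the single-linkage dendrogram of `A`: the multiset of dots
`(birth, death)` over all merge sets. -/
noncomputable def mergegram (A : Set X) (hA : A.Finite) : Multiset (ℝ × EReal) :=
  (slBlocks_finite hA).toFinset.val.map fun B => (slBirth A B, slDeath A B)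

/-!
On the line, the sublevel set of `d(·, A)` at scale `t ≥ 0` is the union of the intervals
`[a - t, a + t]`, so for sorted points `a₀ < ⋯ < aₙ` the gap `(a_k, a_{k+1})` is bridged exactly
from `t = (a_{k+1} - a_k) / 2` on. The classes `[a_k] - [a_{k+1}]` and `[aₙ]` commute with the
structure maps, vanish once their gap is bridged, and at every scale the live ones form a basis of
`H_0`: they span because `[a_i]` telescopes to the sum of the classes of index `≥ i`, and they are
independent because counting the components left of the midpoint of an open gap is a dual
functional. Hence the barcode only sees the multiset of gaps, which is `{1, 2, 4}` for both
`{0, 1, 3, 7}` and `{0, 1, 5, 7}`.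

The single-linkage dendrograms instead are computed scale by scale: the merge set `{0, 1}` lives on
`[1/2, 1)` in the first set, where `3` joins it at scale `1`, but on `[1/2, 2)` in the second.
-/

section SingleLinkage

variable {A : Set X} {s : ℝ}

theorem slRel_symm {x y : X} (h : slRel A s x y) : slRel A s y x := by
  induction h with
  | refl => exact .refl
  | tail _ hstep ih => exact .head ⟨hstep.2.1, hstep.1, dist_comm (α := X) _ _ ▸ hstep.2.2⟩ ih

theorem mem_of_slRel {P : Set X} (hP : ∀ x ∈ P, ∀ y ∈ A, dist x y ≤ 2 * s → y ∈ P)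
    {x y : X} (hx : x ∈ P) (h : slRel A s x y) : y ∈ P := by
  induction h with
  | refl => exact hx
  | tail _ hstep ih => exact hP _ ih _ hstep.2.1 hstep.2.2

theorem slRel_of_mem_chain {l : List X} (hA : ∀ x ∈ l, x ∈ A)
    (hl : l.IsChain (fun x y => dist x y ≤ 2 * s)) {x y : X} (hx : x ∈ l) (hy : y ∈ l) :
    slRel A s x y := by
  have hrel : l.IsChain (slRel A s) :=
    hl.imp_of_mem_imp fun _ _ hx hy hd => .single ⟨hA _ hx, hA _ hy, hd⟩
  have : Std.Symm (slRel A s) := ⟨fun _ _ => slRel_symm⟩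
  have : IsTrans X (slRel A s) := ⟨fun _ _ _ => Relation.ReflTransGen.trans⟩
  exact (List.isChain_iff_pairwise.mp hrel).forall_of_forall (fun _ _ => .refl) hx hy

theorem slPartition_eq_of_chains (L : List (List X)) (hcover : ∀ a ∈ A, ∃ l ∈ L, a ∈ l)
    (hsub : ∀ l ∈ L, ∀ x ∈ l, x ∈ A)
    (hclosed : ∀ l ∈ L, ∀ x ∈ l, ∀ y ∈ A, dist x y ≤ 2 * s → y ∈ l)
    (hne : ∀ l ∈ L, l ≠ []) (hchain : ∀ l ∈ L, l.IsChain (fun x y => dist x y ≤ 2 * s)) :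
    slPartition A s = {P | ∃ l ∈ L, P = {x | x ∈ l}} := by
  have hcluster : ∀ l ∈ L, ∀ a ∈ l, slCluster A s a = {x | x ∈ l} := by
    intro l hl a ha
    ext y
    exact ⟨fun hy => mem_of_slRel (hclosed l hl) ha hy.2,
      fun hy => ⟨hsub l hl y hy, slRel_of_mem_chain (hsub l hl) (hchain l hl) ha hy⟩⟩
  ext P
  constructor
  · rintro ⟨a, ha, rfl⟩
    obtain ⟨l, hl, hal⟩ := hcover a ha
    exact ⟨l, hl, hcluster l hl a hal⟩
  · rintro ⟨l, hl, rfl⟩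
    obtain ⟨x, hx⟩ := List.exists_mem_of_ne_nil l (hne l hl)
    exact ⟨x, hsub l hl x hx, (hcluster l hl x hx).symm⟩

end SingleLinkage

section Lives

theorem csInf_setOf_lifePred {b : ℝ} {d : EReal} (h : (b : EReal) < d) :
    sInf {s | lifePred b d s} = b :=
  IsLeast.csInf_eq ⟨⟨le_rfl, h⟩, fun _ hs => hs.1⟩

theorem sSup_image_setOf_lifePred {b : ℝ} {d : EReal} (h : (b : EReal) < d) :
    sSup ((fun s : ℝ => (s : EReal)) '' {s | lifePred b d s}) = d := by
  refine IsLUB.sSup_eq ⟨?_, fun c hc => ?_⟩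
  · rintro _ ⟨s, hs, rfl⟩
    exact hs.2.le
  · by_contra! hcd
    obtain ⟨x, hx, hxd⟩ := EReal.exists_between_coe_real (max_lt hcd h)
    have hbx : b ≤ x := EReal.coe_le_coe_iff.mp (le_of_max_le_right hx.le)
    exact (max_lt_iff.mp hx).1.not_ge (hc ⟨x, ⟨hbx, hxd⟩, rfl⟩)

variable {A : Set X}

theorem mergegram_eq_of_lives (hA : A.Finite) (lives : List (Set X × ℝ × EReal))
    (hnodup : (lives.map Prod.fst).Nodup) (hbirth : ∀ b ∈ lives, 0 ≤ b.2.1)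
    (hlt : ∀ b ∈ lives, (b.2.1 : EReal) < b.2.2)
    (hpart : ∀ s, 0 ≤ s → slPartition A s = {B | ∃ b ∈ lives, b.1 = B ∧ lifePred b.2.1 b.2.2 s}) :
    mergegram A hA = (lives.map Prod.snd : Multiset (ℝ × EReal)) := by
  have hlife : ∀ b ∈ lives,
      {s | 0 ≤ s ∧ b.1 ∈ slPartition A s} = {s | lifePred b.2.1 b.2.2 s} := by
    intro b hb
    ext s
    constructor
    · rintro ⟨hs, hmem⟩
      rw [hpart s hs] at hmem
      obtain ⟨b', hb', hfst, hlive⟩ := hmem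
      rwa [← List.inj_on_of_nodup_map hnodup hb' hb hfst]
    · intro hlive
      have hs : 0 ≤ s := (hbirth b hb).trans hlive.1
      exact ⟨hs, by rw [hpart s hs]; exact ⟨b, hb, rfl, hlive⟩⟩
  have hblocks : (slBlocks_finite hA).toFinset = (lives.map Prod.fst).toFinset := by
    ext B
    simp only [Set.Finite.mem_toFinset, List.mem_toFinset, List.mem_map]
    constructor
    · rintro ⟨s, hs, hmem⟩
      rw [hpart s hs] at hmem
      obtain ⟨b, hb, rfl, -⟩ := hmem
      exact ⟨b, hb, rfl⟩
    · rintro ⟨b, hb, rfl⟩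
      have hborn : b.2.1 ∈ {s | lifePred b.2.1 b.2.2 s} := ⟨le_rfl, hlt b hb⟩
      rw [← hlife b hb] at hborn
      exact ⟨b.2.1, hborn⟩
  rw [mergegram, hblocks, List.toFinset_val, hnodup.dedup, Multiset.map_coe, List.map_map]
  congr 1
  refine List.map_congr_left fun b hb => ?_
  simp only [Function.comp_apply, slBirth, slDeath, hlife b hb,
    csInf_setOf_lifePred (hlt b hb), sSup_image_setOf_lifePred (hlt b hb)]

theorem lifePred_coe_iff {b d t : ℝ} : lifePred b (d : EReal) t ↔ b ≤ t ∧ t < d := by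
  simp [lifePred]

theorem lifePred_top_iff {b t : ℝ} : lifePred b ⊤ t ↔ b ≤ t := by
  simp [lifePred]

end Lives

section IntervalModules

noncomputable def intCoeff (J : ℝ → Prop) (t : ℝ) : IntCarrier J t →ₗ[ZMod 2] ZMod 2 where
  toFun f := if h : J t then f ⟨h⟩ else 0
  map_add' f g := by by_cases h : J t <;> simp [h]
  map_smul' c f := by by_cases h : J t <;> simp [h]

theorem intCoeff_intMap (J : ℝ → Prop) {s t : ℝ} (h : s ≤ t) (f : IntCarrier J s) :
    intCoeff J t (intMap J h f) = if J t then intCoeff J s f else 0 := by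
  by_cases ht : J t <;> simp [intCoeff, intMap, ht]

theorem eq_zero_of_intCoeff_eq_zero {J : ℝ → Prop} {t : ℝ} {f : IntCarrier J t}
    (hf : intCoeff J t f = 0) : f = 0 := by
  funext h
  simpa [intCoeff, h.down] using hf

variable {ι : Type*} [Fintype ι] {M : Type*} [AddCommGroup M] [Module (ZMod 2) M]

noncomputable def barsToModule (J : ι → ℝ → Prop) (t : ℝ) (G : ι → M) :
    SumCarrier J t →ₗ[ZMod 2] M :=
  ∑ i, (intCoeff (J i) t ∘ₗ LinearMap.proj i).smulRight (G i)

theorem barsToModule_apply (J : ι → ℝ → Prop) (t : ℝ) (G : ι → M) (x : SumCarrier J t) :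
    barsToModule J t G x = ∑ i, intCoeff (J i) t (x i) • G i := by
  simp [barsToModule]

theorem barsToModule_injective [DecidableEq ι] {J : ι → ℝ → Prop} {t : ℝ} {G : ι → M}
    (hdual : ∀ i, J i t → ∃ φ : M →ₗ[ZMod 2] ZMod 2, ∀ j, φ (G j) = if j = i then 1 else 0) :
    Function.Injective (barsToModule J t G) := by
  refine (injective_iff_map_eq_zero _).mpr fun x hx => funext fun i => ?_
  refine eq_zero_of_intCoeff_eq_zero ?_
  by_cases hi : J i t
  · obtain ⟨φ, hφ⟩ := hdual i hi
    have := congrArg φ hx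
    simpa [barsToModule_apply, hφ] using this
  · simp [intCoeff, hi]

theorem barsToModule_single {J : ι → ℝ → Prop} {t : ℝ} (G : ι → M) {i : ι} (hi : J i t) :
    barsToModule J t G (Pi.single i fun _ => 1) = G i := by
  rw [barsToModule_apply, Finset.sum_eq_single i
    (fun j _ hj => by simp [intCoeff, Pi.single_eq_of_ne hj]) (by simp)]
  simp [intCoeff, hi]

end IntervalModules

section PersistenceModule

variable {A : Set X}

theorem isPersistenceDiagramOf_of_bijective {m : ℕ} (bars : Fin m → ℝ × EReal)
    (hbars : ∀ i, ((bars i).1 : EReal) < (bars i).2) (G : (t : ℝ) → Fin m → PH0Carrier A t)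
    (hmap : ∀ s t (h : s ≤ t) i, lifePred (bars i).1 (bars i).2 s → ph0Map A h (G s i) = G t i)
    (hdead : ∀ (t : ℝ) i, (bars i).2 ≤ t → G t i = 0)
    (hbij : ∀ t, Function.Bijective
      (barsToModule (fun i => lifePred (bars i).1 (bars i).2) t (G t))) :
    IsPersistenceDiagramOf A (Multiset.map bars Finset.univ.val) := by
  set J := fun i => lifePred (bars i).1 (bars i).2
  have hnat : ∀ s t (h : s ≤ t) (x : SumCarrier J s),
      ph0Map A h (barsToModule J s (G s) x) = barsToModule J t (G t) (sumMap J h x) := by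
    intro s t h x
    simp only [barsToModule_apply, map_sum, map_smul]
    refine Finset.sum_congr rfl fun i _ => ?_
    rw [show sumMap J h x i = intMap (J i) h (x i) from rfl, intCoeff_intMap]
    by_cases hs : J i s
    · rw [hmap s t h i hs]
      by_cases ht : J i t
      · rw [if_pos ht]
      · rw [if_neg ht, zero_smul, hdead t i (not_lt.mp fun hlt => ht ⟨hs.1.trans h, hlt⟩),
          smul_zero]
    · have : intCoeff (J i) s (x i) = 0 := by simp [intCoeff, hs]
      simp [this]
  refine ⟨m, bars, rfl, hbars, fun t => (LinearEquiv.ofBijective _ (hbij t)).symm,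
    fun s t h x => ?_⟩
  obtain ⟨y, rfl⟩ := (hbij s).2 x
  rw [LinearEquiv.ofBijective_symm_apply_apply, LinearEquiv.symm_apply_eq]
  exact hnat s t h y

end PersistenceModule

section H0Classes

variable {A : Set X}

theorem mem_sublevel_of_mem {x : X} (hx : x ∈ A) {t : ℝ} (ht : 0 ≤ t) : x ∈ sublevel A t := by
  simpa [sublevel, Metric.infDist_zero_of_mem hx] using ht

theorem mem_sublevel_iff (hA : IsCompact A) (hne : A.Nonempty) {x : X} {t : ℝ} :
    x ∈ sublevel A t ↔ ∃ a ∈ A, dist x a ≤ t := by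
  refine ⟨fun h => ?_, fun ⟨a, ha, hd⟩ => (Metric.infDist_le_dist_of_mem ha).trans hd⟩
  obtain ⟨a, ha, hd⟩ := hA.exists_infDist_eq_dist hne x
  exact ⟨a, ha, hd ▸ h⟩

noncomputable def h0Class (A : Set X) (t : ℝ) (x : X) : PH0Carrier A t :=
  if h : x ∈ sublevel A t then Finsupp.single (ConnectedComponents.mk ⟨x, h⟩) 1 else 0

theorem h0Class_of_mem {t : ℝ} {x : X} (h : x ∈ sublevel A t) :
    h0Class A t x = Finsupp.single (ConnectedComponents.mk ⟨x, h⟩) 1 :=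
  dif_pos h

theorem ph0Map_h0Class {s t : ℝ} (h : s ≤ t) {x : X} (hx : x ∈ sublevel A s) :
    ph0Map A h (h0Class A s x) = h0Class A t x := by
  rw [h0Class_of_mem hx, h0Class_of_mem (sublevel_mono A h hx), ph0Map,
    Finsupp.lmapDomain_apply, Finsupp.mapDomain_single]
  rfl

end H0Classes

section RealLine

theorem connectedComponentsMk_eq_of_Icc_subset {S : Set ℝ} {x y : S} (hxy : (x : ℝ) ≤ y)
    (h : Set.Icc (x : ℝ) y ⊆ S) : ConnectedComponents.mk x = ConnectedComponents.mk y := by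
  have hI : IsPreconnected (Subtype.val ⁻¹' Set.Icc (x : ℝ) y : Set S) := by
    rw [← Topology.IsInducing.subtypeVal.isPreconnected_image, Subtype.image_preimage_coe,
      Set.inter_eq_right.mpr h]
    exact isPreconnected_Icc
  exact ConnectedComponents.coe_eq_coe'.mpr
    (hI.subset_connectedComponent (Set.right_mem_Icc.mpr hxy) (Set.left_mem_Icc.mpr hxy))

theorem continuous_decide_lt {S : Set ℝ} {m : ℝ} (hm : m ∉ S) :
    Continuous fun x : S => decide ((x : ℝ) < m) := by
  refine continuous_discrete_rng.mpr fun b => ?_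
  cases b
  · have : (fun x : S => decide ((x : ℝ) < m)) ⁻¹' {false} = Subtype.val ⁻¹' Set.Ioi m := by
      ext x
      simp only [Set.mem_preimage, Set.mem_singleton_iff, decide_eq_false_iff_not, not_lt,
        Set.mem_Ioi]
      exact ⟨fun h => h.lt_of_ne fun hx => hm (hx ▸ x.2), le_of_lt⟩
    rw [this]
    exact isOpen_Ioi.preimage continuous_subtype_val
  · have : (fun x : S => decide ((x : ℝ) < m)) ⁻¹' {true} = Subtype.val ⁻¹' Set.Iio m := by
      ext x
      simp
    rw [this]
    exact isOpen_Iio.preimage continuous_subtype_val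

variable {A : Set ℝ} {t : ℝ}

theorem h0Class_eq_of_dist_le {a b : ℝ} (ha : a ∈ A) (hb : b ∈ A) (ht : dist a b ≤ 2 * t) :
    h0Class A t a = h0Class A t b := by
  wlog hab : a ≤ b generalizing a b
  · exact (this hb ha (dist_comm a b ▸ ht) (le_of_not_ge hab)).symm
  have ht0 : 0 ≤ t := by linarith [dist_nonneg (x := a) (y := b)]
  have haS := mem_sublevel_of_mem ha ht0
  have hbS := mem_sublevel_of_mem hb ht0
  rw [h0Class_of_mem haS, h0Class_of_mem hbS]
  congr 1
  refine connectedComponentsMk_eq_of_Icc_subset (x := ⟨a, haS⟩) (y := ⟨b, hbS⟩) hab ?_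
  rw [Real.dist_eq, abs_sub_comm, abs_of_nonneg (sub_nonneg.mpr hab)] at ht
  intro z hz
  rcases le_total z ((a + b) / 2) with hz' | hz'
  · exact (Metric.infDist_le_dist_of_mem ha).trans
      (by rw [Real.dist_eq, abs_of_nonneg (by linarith [hz.1])]; linarith)
  · exact (Metric.infDist_le_dist_of_mem hb).trans
      (by rw [Real.dist_eq, abs_of_nonpos (by linarith [hz.2])]; linarith)

theorem exists_single_eq_h0Class (hA : IsCompact A) (hne : A.Nonempty) (y : sublevel A t) :
    ∃ a ∈ A, Finsupp.single (ConnectedComponents.mk y) 1 = h0Class A t a := by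
  obtain ⟨a, ha, hd⟩ := (mem_sublevel_iff hA hne).mp y.2
  have haS := mem_sublevel_of_mem ha (dist_nonneg.trans hd)
  refine ⟨a, ha, ?_⟩
  rw [h0Class_of_mem haS]
  congr 1
  rw [Real.dist_eq, abs_le] at hd
  have hseg : ∀ z ∈ Set.uIcc (y : ℝ) a, z ∈ sublevel A t := fun z hz =>
    (Metric.infDist_le_dist_of_mem ha).trans <| by
      rw [Real.dist_eq, abs_le]
      rcases Set.mem_uIcc.mp hz with hz | hz <;> constructor <;> linarith [hz.1, hz.2]
  rcases le_total (y : ℝ) a with hya | hay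
  · exact connectedComponentsMk_eq_of_Icc_subset (y := ⟨a, haS⟩) hya
      fun z hz => hseg z (Set.Icc_subset_uIcc hz)
  · exact (connectedComponentsMk_eq_of_Icc_subset (x := ⟨a, haS⟩) hay
      fun z hz => hseg z (Set.Icc_subset_uIcc' hz)).symm

theorem midpoint_notMem_sublevel (hA : IsCompact A) (hne : A.Nonempty) {u v : ℝ}
    (hgap : ∀ a ∈ A, a ≤ u ∨ v ≤ a) (ht : t < (v - u) / 2) : (u + v) / 2 ∉ sublevel A t := by
  rw [mem_sublevel_iff hA hne]
  rintro ⟨a, ha, hd⟩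
  rw [Real.dist_eq, abs_le] at hd
  rcases hgap a ha with h | h <;> linarith [hd.1, hd.2]

end RealLine

section Counting

noncomputable def componentCount (A : Set X) (t : ℝ) : PH0Carrier A t →ₗ[ZMod 2] ZMod 2 :=
  Finsupp.linearCombination (ZMod 2) fun _ => 1

theorem componentCount_h0Class {A : Set X} {t : ℝ} {x : X} (hx : x ∈ sublevel A t) :
    componentCount A t (h0Class A t x) = 1 := by
  simp [componentCount, h0Class_of_mem hx]

noncomputable def leftCount {A : Set ℝ} {t m : ℝ} (hm : m ∉ sublevel A t) :
    PH0Carrier A t →ₗ[ZMod 2] ZMod 2 :=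
  Finsupp.linearCombination (ZMod 2) fun c =>
    if (continuous_decide_lt hm).connectedComponentsLift c then 1 else 0

theorem leftCount_h0Class {A : Set ℝ} {t m : ℝ} (hm : m ∉ sublevel A t) {x : ℝ}
    (hx : x ∈ sublevel A t) : leftCount hm (h0Class A t x) = if x < m then 1 else 0 := by
  simp [leftCount, h0Class_of_mem hx, Continuous.connectedComponentsLift_apply_coe]

end Counting

theorem Fin.sum_Ici_snoc_sub {M : Type*} [AddCommGroup M] {n : ℕ} (g : Fin (n + 1) → M)
    (i : Fin (n + 1)) :
    ∑ j ∈ Finset.Ici i,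
      Fin.snoc (α := fun _ => M) (fun k : Fin n => g k.castSucc - g k.succ) (g (Fin.last n)) j =
      g i := by
  induction i using Fin.reverseInduction with
  | last =>
    rw [← Fin.top_eq_last, Finset.Ici_top, Finset.sum_singleton, Fin.top_eq_last, Fin.snoc_last]
  | cast k ih =>
    have hIci : Finset.Ici k.castSucc = insert k.castSucc (Finset.Ici k.succ) := by
      ext j
      simp only [Finset.mem_Ici, Finset.mem_insert, le_iff_eq_or_lt (a := k.castSucc),
        Fin.castSucc_lt_iff_succ_le, eq_comm]
    rw [hIci, Finset.sum_insert (by simp), ih, Fin.snoc_castSucc, sub_add_cancel]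

section SortedPoints

variable {n : ℕ} {a : Fin (n + 1) → ℝ}

noncomputable def lineBars (a : Fin (n + 1) → ℝ) : Fin (n + 1) → ℝ × EReal :=
  Fin.snoc (α := fun _ => ℝ × EReal)
    (fun k : Fin n => (0, (((a k.succ - a k.castSucc) / 2 : ℝ) : EReal))) (0, ⊤)

theorem lineBars_fst (i : Fin (n + 1)) : (lineBars a i).1 = 0 := by
  induction i using Fin.lastCases <;> simp [lineBars]

noncomputable def lineGen (a : Fin (n + 1) → ℝ) (t : ℝ) :
    Fin (n + 1) → PH0Carrier (Set.range a) t :=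
  Fin.snoc (α := fun _ => PH0Carrier (Set.range a) t)
    (fun k : Fin n => h0Class _ t (a k.castSucc) - h0Class _ t (a k.succ))
    (h0Class _ t (a (Fin.last n)))

theorem sum_Ici_lineGen (t : ℝ) (i : Fin (n + 1)) :
    ∑ j ∈ Finset.Ici i, lineGen a t j = h0Class _ t (a i) :=
  Fin.sum_Ici_snoc_sub (fun j => h0Class (Set.range a) t (a j)) i

theorem ph0Map_lineGen {s t : ℝ} (hs : 0 ≤ s) (h : s ≤ t) (i : Fin (n + 1)) :
    ph0Map (Set.range a) h (lineGen a s i) = lineGen a t i := by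
  have hmem : ∀ j, a j ∈ sublevel (Set.range a) s := fun j =>
    mem_sublevel_of_mem (Set.mem_range_self j) hs
  induction i using Fin.lastCases with
  | last => simp only [lineGen, Fin.snoc_last, ph0Map_h0Class h (hmem _)]
  | cast k => simp only [lineGen, Fin.snoc_castSucc, map_sub, ph0Map_h0Class h (hmem _)]

theorem lineGen_eq_zero (ha : StrictMono a) {t : ℝ} {i : Fin (n + 1)}
    (hi : (lineBars a i).2 ≤ t) : lineGen a t i = 0 := by
  induction i using Fin.lastCases with
  | last => simp [lineBars] at hi
  | cast k =>
    simp only [lineBars, Fin.snoc_castSucc, EReal.coe_le_coe_iff] at hi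
    rw [lineGen, Fin.snoc_castSucc, sub_eq_zero]
    refine h0Class_eq_of_dist_le (Set.mem_range_self _) (Set.mem_range_self _) ?_
    rw [Real.dist_eq, abs_sub_comm, abs_of_pos (sub_pos.mpr (ha k.castSucc_lt_succ))]
    linarith

theorem lt_midpoint_iff (ha : StrictMono a) (k : Fin n) (j : Fin (n + 1)) :
    a j < (a k.castSucc + a k.succ) / 2 ↔ j ≤ k.castSucc := by
  have hk := ha k.castSucc_lt_succ
  constructor
  · intro h
    by_contra! hj
    have := ha.monotone (Fin.castSucc_lt_iff_succ_le.mp hj)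
    linarith
  · intro hj
    have := ha.monotone hj
    linarith

theorem lineGen_dual (ha : StrictMono a) {t : ℝ} {i : Fin (n + 1)}
    (hi : lifePred (lineBars a i).1 (lineBars a i).2 t) :
    ∃ φ : PH0Carrier (Set.range a) t →ₗ[ZMod 2] ZMod 2,
      ∀ j, φ (lineGen a t j) = if j = i then 1 else 0 := by
  have ht : 0 ≤ t := lineBars_fst i ▸ hi.1
  have hmem : ∀ j, a j ∈ sublevel (Set.range a) t := fun j =>
    mem_sublevel_of_mem (Set.mem_range_self j) ht
  induction i using Fin.lastCases with
  | last =>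
    refine ⟨componentCount _ t, fun j => ?_⟩
    induction j using Fin.lastCases with
    | last => simp [lineGen, componentCount_h0Class (hmem _)]
    | cast l =>
      simp [lineGen, componentCount_h0Class (hmem _), Fin.castSucc_ne_last]
  | cast k =>
    have hgap : ∀ x ∈ Set.range a, x ≤ a k.castSucc ∨ a k.succ ≤ x := by
      rintro _ ⟨j, rfl⟩
      rcases le_or_gt j k.castSucc with hj | hj
      · exact Or.inl (ha.monotone hj)
      · exact Or.inr (ha.monotone (Fin.castSucc_lt_iff_succ_le.mp hj))
    have hlive : t < (a k.succ - a k.castSucc) / 2 := by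
      simpa [lineBars] using hi.2
    have hm := midpoint_notMem_sublevel (Set.finite_range a).isCompact (Set.range_nonempty a)
      hgap hlive
    -- `a j` lies left of the midpoint iff `j ≤ k`, so `leftCount` takes the value
    -- `[l ≤ k] - [l < k]` on the generator of the gap `l`
    refine ⟨leftCount hm, fun j => ?_⟩
    induction j using Fin.lastCases with
    | last =>
      simp [lineGen, leftCount_h0Class hm (hmem _), lt_midpoint_iff ha,
        (Fin.castSucc_ne_last k).symm]
    | cast l =>
      simp only [lineGen, Fin.snoc_castSucc, map_sub, leftCount_h0Class hm (hmem _),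
        lt_midpoint_iff ha, Fin.castSucc_le_castSucc_iff, Fin.succ_le_castSucc_iff,
        Fin.castSucc_inj]
      rcases lt_trichotomy l k with hlk | rfl | hlk
      · simp [hlk.le, hlk, hlk.ne]
      · simp
      · simp [hlk.not_ge, hlk.not_gt, hlk.ne']

theorem lineGen_bijective (ha : StrictMono a) (t : ℝ) :
    Function.Bijective
      (barsToModule (fun i => lifePred (lineBars a i).1 (lineBars a i).2) t (lineGen a t)) := by
  refine ⟨barsToModule_injective fun i hi => lineGen_dual ha hi, ?_⟩
  rw [← LinearMap.range_eq_top, eq_top_iff, ← Finsupp.basisSingleOne.span_eq,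
    Submodule.span_le]
  rintro _ ⟨c, rfl⟩
  obtain ⟨y, rfl⟩ := ConnectedComponents.surjective_coe c
  have ht : 0 ≤ t := Metric.infDist_nonneg.trans y.2
  obtain ⟨_, ⟨i, rfl⟩, hi⟩ :=
    exists_single_eq_h0Class (Set.finite_range a).isCompact (Set.range_nonempty a) y
  rw [Finsupp.coe_basisSingleOne, SetLike.mem_coe]
  beta_reduce
  rw [hi, ← sum_Ici_lineGen]
  refine Submodule.sum_mem _ fun j _ => ?_
  by_cases hj : lifePred (lineBars a j).1 (lineBars a j).2 t
  · exact ⟨_, barsToModule_single _ hj⟩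
  · have hdead : (lineBars a j).2 ≤ t :=
      not_lt.mp fun h => hj ⟨(lineBars_fst j).symm ▸ ht, h⟩
    rw [lineGen_eq_zero ha hdead]
    exact Submodule.zero_mem _

theorem isPersistenceDiagramOf_range_of_strictMono (ha : StrictMono a) :
    IsPersistenceDiagramOf (Set.range a) (Multiset.map (lineBars a) Finset.univ.val) := by
  refine isPersistenceDiagramOf_of_bijective (lineBars a) (fun i => ?_) (lineGen a)
    (fun s t h i hs => ph0Map_lineGen (lineBars_fst i ▸ hs.1) h i)
    (fun t i hi => lineGen_eq_zero ha hi) (lineGen_bijective ha)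
  induction i using Fin.lastCases with
  | last => simp [lineBars]
  | cast k =>
    simp only [lineBars, Fin.snoc_castSucc, EReal.coe_lt_coe_iff]
    linarith [ha k.castSucc_lt_succ]

theorem map_lineBars_univ (a : Fin (n + 1) → ℝ) :
    Multiset.map (lineBars a) Finset.univ.val =
      Multiset.map (fun k : Fin n => ((0 : ℝ), (((a k.succ - a k.castSucc) / 2 : ℝ) : EReal)))
        Finset.univ.val + {(0, ⊤)} := by
  rw [Fin.univ_val_map, Fin.univ_val_map, List.ofFn_succ']
  simp [lineBars, ← Multiset.coe_add]

end SortedPoints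

theorem isPersistenceDiagramOf_four {p q r s : ℝ} (hpq : p < q) (hqr : q < r) (hrs : r < s) :
    IsPersistenceDiagramOf ({p, q, r, s} : Set ℝ)
      {((0 : ℝ), (((q - p) / 2 : ℝ) : EReal)), ((0 : ℝ), (((r - q) / 2 : ℝ) : EReal)),
        ((0 : ℝ), (((s - r) / 2 : ℝ) : EReal)), ((0 : ℝ), (⊤ : EReal))} := by
  have ha : StrictMono ![p, q, r, s] := Fin.strictMono_iff_lt_succ.mpr fun i => by
    fin_cases i
    exacts [hpq, hqr, hrs]
  have h := isPersistenceDiagramOf_range_of_strictMono ha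
  rw [map_lineBars_univ] at h
  convert h using 1
  · simp only [Matrix.range_cons, Matrix.range_empty, Set.union_empty, Set.singleton_union]
  · rfl

section Examples

variable {s : ℝ}

theorem isPersistenceDiagramOf_0137 : IsPersistenceDiagramOf ({0, 1, 3, 7} : Set ℝ)
    {((0 : ℝ), ((0.5 : ℝ) : EReal)), ((0 : ℝ), ((1 : ℝ) : EReal)),
      ((0 : ℝ), ((2 : ℝ) : EReal)), ((0 : ℝ), (⊤ : EReal))} := by
  convert isPersistenceDiagramOf_four (p := 0) (q := 1) (r := 3) (s := 7)
    (by norm_num) (by norm_num) (by norm_num) using 5 <;> norm_num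

theorem isPersistenceDiagramOf_0157 : IsPersistenceDiagramOf ({0, 1, 5, 7} : Set ℝ)
    {((0 : ℝ), ((0.5 : ℝ) : EReal)), ((0 : ℝ), ((1 : ℝ) : EReal)),
      ((0 : ℝ), ((2 : ℝ) : EReal)), ((0 : ℝ), (⊤ : EReal))} := by
  simp only [Multiset.insert_eq_cons]
  rw [Multiset.cons_swap ((0 : ℝ), ((1 : ℝ) : EReal))]
  convert isPersistenceDiagramOf_four (p := 0) (q := 1) (r := 5) (s := 7)
    (by norm_num) (by norm_num) (by norm_num) using 5
  norm_num

theorem slPartition_0137_of_lt (h : s < 0.5) :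
    slPartition ({0, 1, 3, 7} : Set ℝ) s = {{0}, {1}, {3}, {7}} := by
  rw [slPartition_eq_of_chains [[0], [1], [3], [7]] (by simp) (by simp)
    (by norm_num [Real.dist_eq]; and_intros <;> linarith) (by simp) (by simp)]
  ext P
  simp only [Set.mem_insert_iff, Set.mem_singleton_iff, List.mem_cons, exists_eq_or_imp,
    exists_eq_left, List.not_mem_nil, or_false, Set.ofPred_or, Set.ofPred_eq_eq_singleton,
    Set.singleton_union]

theorem slPartition_0137_of_lt_one (h₀ : 0.5 ≤ s) (h : s < 1) :
    slPartition ({0, 1, 3, 7} : Set ℝ) s = {{0, 1}, {3}, {7}} := by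
  rw [slPartition_eq_of_chains [[0, 1], [3], [7]] (by simp) (by simp)
    (by norm_num [Real.dist_eq]; and_intros <;> linarith) (by simp)
    (by norm_num [Real.dist_eq]; linarith)]
  ext P
  simp only [Set.mem_insert_iff, Set.mem_singleton_iff, List.mem_cons, exists_eq_or_imp,
    exists_eq_left, List.not_mem_nil, or_false, Set.ofPred_or, Set.ofPred_eq_eq_singleton,
    Set.singleton_union]

theorem slPartition_0137_of_lt_two (h₀ : 1 ≤ s) (h : s < 2) :
    slPartition ({0, 1, 3, 7} : Set ℝ) s = {{0, 1, 3}, {7}} := by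
  rw [slPartition_eq_of_chains [[0, 1, 3], [7]] (by simp) (by simp)
    (by norm_num [Real.dist_eq]; and_intros <;> linarith) (by simp)
    (by norm_num [Real.dist_eq]; and_intros <;> linarith)]
  ext P
  simp only [Set.mem_insert_iff, Set.mem_singleton_iff, List.mem_cons, exists_eq_or_imp,
    exists_eq_left, List.not_mem_nil, or_false, Set.ofPred_or, Set.ofPred_eq_eq_singleton,
    Set.singleton_union]

theorem slPartition_0137_of_ge (h : 2 ≤ s) :
    slPartition ({0, 1, 3, 7} : Set ℝ) s = {{0, 1, 3, 7}} := by
  rw [slPartition_eq_of_chains [[0, 1, 3, 7]] (by simp) (by simp) (by simp) (by simp)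
    (by norm_num [Real.dist_eq]; and_intros <;> linarith)]
  ext P
  simp only [Set.mem_singleton_iff, List.mem_cons, exists_eq_left, List.not_mem_nil, or_false,
    Set.ofPred_or, Set.ofPred_eq_eq_singleton, Set.singleton_union]

noncomputable def lives0137 : List (Set ℝ × ℝ × EReal) :=
  [({0}, 0, (0.5 : ℝ)), ({1}, 0, (0.5 : ℝ)), ({3}, 0, (1 : ℝ)), ({0, 1}, 0.5, (1 : ℝ)),
    ({7}, 0, (2 : ℝ)), ({0, 1, 3}, 1, (2 : ℝ)), ({0, 1, 3, 7}, 2, ⊤)]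

theorem slPartition_0137 (hs : 0 ≤ s) : slPartition ({0, 1, 3, 7} : Set ℝ) s =
    {B | ∃ b ∈ lives0137, b.1 = B ∧ lifePred b.2.1 b.2.2 s} := by
  ext B
  simp only [lives0137, List.mem_cons, List.not_mem_nil, exists_eq_or_imp, or_false,
    exists_eq_left, Set.mem_ofPred_eq, lifePred_coe_iff, lifePred_top_iff]
  rcases lt_or_ge s 0.5 with h₁ | h₁
  · rw [slPartition_0137_of_lt h₁]
    simp only [Set.mem_insert_iff, Set.mem_singleton_iff]
    grind
  rcases lt_or_ge s 1 with h₂ | h₂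
  · rw [slPartition_0137_of_lt_one h₁ h₂]
    simp only [Set.mem_insert_iff, Set.mem_singleton_iff]
    grind
  rcases lt_or_ge s 2 with h₃ | h₃
  · rw [slPartition_0137_of_lt_two h₂ h₃]
    simp only [Set.mem_insert_iff, Set.mem_singleton_iff]
    grind
  · rw [slPartition_0137_of_ge h₃, Set.mem_singleton_iff]
    grind

theorem mergegram_0137 : mergegram ({0, 1, 3, 7} : Set ℝ) (Set.toFinite _) =
    {((0 : ℝ), ((0.5 : ℝ) : EReal)), ((0 : ℝ), ((0.5 : ℝ) : EReal)),
      ((0 : ℝ), ((1 : ℝ) : EReal)), ((0.5 : ℝ), ((1 : ℝ) : EReal)),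
      ((0 : ℝ), ((2 : ℝ) : EReal)), ((1 : ℝ), ((2 : ℝ) : EReal)),
      ((2 : ℝ), (⊤ : EReal))} := by
  rw [mergegram_eq_of_lives _ lives0137 ?_ ?_ ?_ fun s hs => slPartition_0137 hs]
  · rfl
  · simp [lives0137, Set.Subset.antisymm_iff, Set.insert_subset_iff]
  · norm_num [lives0137]
  · simp only [lives0137, List.mem_cons, List.not_mem_nil, forall_eq_or_imp,
      EReal.coe_lt_coe_iff, EReal.coe_lt_top]
    norm_num

theorem slPartition_0157_of_lt (h : s < 0.5) :
    slPartition ({0, 1, 5, 7} : Set ℝ) s = {{0}, {1}, {5}, {7}} := by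
  rw [slPartition_eq_of_chains [[0], [1], [5], [7]] (by simp) (by simp)
    (by norm_num [Real.dist_eq]; and_intros <;> linarith) (by simp) (by simp)]
  ext P
  simp only [Set.mem_insert_iff, Set.mem_singleton_iff, List.mem_cons, exists_eq_or_imp,
    exists_eq_left, List.not_mem_nil, or_false, Set.ofPred_or, Set.ofPred_eq_eq_singleton,
    Set.singleton_union]

theorem slPartition_0157_of_lt_one (h₀ : 0.5 ≤ s) (h : s < 1) :
    slPartition ({0, 1, 5, 7} : Set ℝ) s = {{0, 1}, {5}, {7}} := by
  rw [slPartition_eq_of_chains [[0, 1], [5], [7]] (by simp) (by simp)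
    (by norm_num [Real.dist_eq]; and_intros <;> linarith) (by simp)
    (by norm_num [Real.dist_eq]; linarith)]
  ext P
  simp only [Set.mem_insert_iff, Set.mem_singleton_iff, List.mem_cons, exists_eq_or_imp,
    exists_eq_left, List.not_mem_nil, or_false, Set.ofPred_or, Set.ofPred_eq_eq_singleton,
    Set.singleton_union]

theorem slPartition_0157_of_lt_two (h₀ : 1 ≤ s) (h : s < 2) :
    slPartition ({0, 1, 5, 7} : Set ℝ) s = {{0, 1}, {5, 7}} := by
  rw [slPartition_eq_of_chains [[0, 1], [5, 7]] (by simp) (by simp)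
    (by norm_num [Real.dist_eq]; and_intros <;> linarith) (by simp)
    (by norm_num [Real.dist_eq]; and_intros <;> linarith)]
  ext P
  simp only [Set.mem_insert_iff, Set.mem_singleton_iff, List.mem_cons, exists_eq_or_imp,
    exists_eq_left, List.not_mem_nil, or_false, Set.ofPred_or, Set.ofPred_eq_eq_singleton,
    Set.singleton_union]

theorem slPartition_0157_of_ge (h : 2 ≤ s) :
    slPartition ({0, 1, 5, 7} : Set ℝ) s = {{0, 1, 5, 7}} := by
  rw [slPartition_eq_of_chains [[0, 1, 5, 7]] (by simp) (by simp) (by simp) (by simp)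
    (by norm_num [Real.dist_eq]; and_intros <;> linarith)]
  ext P
  simp only [Set.mem_singleton_iff, List.mem_cons, exists_eq_left, List.not_mem_nil, or_false,
    Set.ofPred_or, Set.ofPred_eq_eq_singleton, Set.singleton_union]

noncomputable def lives0157 : List (Set ℝ × ℝ × EReal) :=
  [({0}, 0, (0.5 : ℝ)), ({1}, 0, (0.5 : ℝ)), ({5}, 0, (1 : ℝ)), ({7}, 0, (1 : ℝ)),
    ({0, 1}, 0.5, (2 : ℝ)), ({5, 7}, 1, (2 : ℝ)), ({0, 1, 5, 7}, 2, ⊤)]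

theorem slPartition_0157 (hs : 0 ≤ s) : slPartition ({0, 1, 5, 7} : Set ℝ) s =
    {B | ∃ b ∈ lives0157, b.1 = B ∧ lifePred b.2.1 b.2.2 s} := by
  ext B
  simp only [lives0157, List.mem_cons, List.not_mem_nil, exists_eq_or_imp, or_false,
    exists_eq_left, Set.mem_ofPred_eq, lifePred_coe_iff, lifePred_top_iff]
  rcases lt_or_ge s 0.5 with h₁ | h₁
  · rw [slPartition_0157_of_lt h₁]
    simp only [Set.mem_insert_iff, Set.mem_singleton_iff]
    grind
  rcases lt_or_ge s 1 with h₂ | h₂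
  · rw [slPartition_0157_of_lt_one h₁ h₂]
    simp only [Set.mem_insert_iff, Set.mem_singleton_iff]
    grind
  rcases lt_or_ge s 2 with h₃ | h₃
  · rw [slPartition_0157_of_lt_two h₂ h₃]
    simp only [Set.mem_insert_iff, Set.mem_singleton_iff]
    grind
  · rw [slPartition_0157_of_ge h₃, Set.mem_singleton_iff]
    grind

theorem mergegram_0157 : mergegram ({0, 1, 5, 7} : Set ℝ) (Set.toFinite _) =
    {((0 : ℝ), ((0.5 : ℝ) : EReal)), ((0 : ℝ), ((0.5 : ℝ) : EReal)),
      ((0 : ℝ), ((1 : ℝ) : EReal)), ((0 : ℝ), ((1 : ℝ) : EReal)),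
      ((0.5 : ℝ), ((2 : ℝ) : EReal)), ((1 : ℝ), ((2 : ℝ) : EReal)),
      ((2 : ℝ), (⊤ : EReal))} := by
  rw [mergegram_eq_of_lives _ lives0157 ?_ ?_ ?_ fun s hs => slPartition_0157 hs]
  · rfl
  · simp [lives0157, Set.Subset.antisymm_iff, Set.insert_subset_iff]
  · norm_num [lives0157]
  · simp only [lives0157, List.mem_cons, List.not_mem_nil, forall_eq_or_imp,
      EReal.coe_lt_coe_iff, EReal.coe_lt_top]
    norm_num

end Examples

/-- Example: the sets `A = {0,1,3,7}` and `B = {0,1,5,7}` in `ℝ` have equal 0D persistence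
diagrams `{(0,0.5), (0,1), (0,2), (0,+∞)}` but different mergegrams; hence the mergegram of
the single-linkage dendrogram is a strictly stronger isometry invariant than the
0D persistence diagram. -/
theorem mergegram_stronger_than_0D_persistence :
    IsPersistenceDiagramOf ({0, 1, 3, 7} : Set ℝ)
      {((0 : ℝ), ((0.5 : ℝ) : EReal)), ((0 : ℝ), ((1 : ℝ) : EReal)),
        ((0 : ℝ), ((2 : ℝ) : EReal)), ((0 : ℝ), (⊤ : EReal))} ∧
    IsPersistenceDiagramOf ({0, 1, 5, 7} : Set ℝ)
      {((0 : ℝ), ((0.5 : ℝ) : EReal)), ((0 : ℝ), ((1 : ℝ) : EReal)),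
        ((0 : ℝ), ((2 : ℝ) : EReal)), ((0 : ℝ), (⊤ : EReal))} ∧
    mergegram ({0, 1, 3, 7} : Set ℝ) (Set.toFinite _) =
      {((0 : ℝ), ((0.5 : ℝ) : EReal)), ((0 : ℝ), ((0.5 : ℝ) : EReal)),
        ((0 : ℝ), ((1 : ℝ) : EReal)), ((0.5 : ℝ), ((1 : ℝ) : EReal)),
        ((0 : ℝ), ((2 : ℝ) : EReal)), ((1 : ℝ), ((2 : ℝ) : EReal)),
        ((2 : ℝ), (⊤ : EReal))} ∧
    mergegram ({0, 1, 5, 7} : Set ℝ) (Set.toFinite _) =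
      {((0 : ℝ), ((0.5 : ℝ) : EReal)), ((0 : ℝ), ((0.5 : ℝ) : EReal)),
        ((0 : ℝ), ((1 : ℝ) : EReal)), ((0 : ℝ), ((1 : ℝ) : EReal)),
        ((0.5 : ℝ), ((2 : ℝ) : EReal)), ((1 : ℝ), ((2 : ℝ) : EReal)),
        ((2 : ℝ), (⊤ : EReal))} ∧
    mergegram ({0, 1, 3, 7} : Set ℝ) (Set.toFinite _) ≠
      mergegram ({0, 1, 5, 7} : Set ℝ) (Set.toFinite _) := by
  refine ⟨isPersistenceDiagramOf_0137, isPersistenceDiagramOf_0157, mergegram_0137,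
    mergegram_0157, ?_⟩
  rw [mergegram_0137, mergegram_0157]
  intro h
  have hdot := congrArg (((0.5 : ℝ), ((1 : ℝ) : EReal)) ∈ ·) h
  norm_num at hdot
  norm_cast at hdot
end

section
/- For any finite subsets A and B of a metric space (X,d), the bottleneck distance between the mergegrams of their single-linkage dendrograms is bounded by the Hausdorff distance between the sets: BD(MG(Δ_SL(A)), MG(Δ_SL(B))) ≤ HD(A,B). -/
open Classical

variable {X : Type*} [MetricSpace X]

attribute [local instance] Classical.propDecidable

/-- Two dots of a diagram (with possibly infinite death) are `δ`-close in the
`L∞`-distance on the plane. -/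
def closeDot (δ : ℝ) (p q : ℝ × EReal) : Prop :=
  |p.1 - q.1| ≤ δ ∧
    ((p.2 = ⊤ ∧ q.2 = ⊤) ∨
      ∃ a b : ℝ, p.2 = (a : EReal) ∧ q.2 = (b : EReal) ∧ |a - b| ≤ δ)

/-- A dot is within `L∞`-distance `δ` of the diagonal `{p = q}`. -/
def nearDiag (δ : ℝ) (p : ℝ × EReal) : Prop :=
  ∃ a : ℝ, p.2 = (a : EReal) ∧ |a - p.1| / 2 ≤ δ

/-- A `δ`-matching between two diagrams `C` and `D` (augmented with all diagonal dots of
infinite multiplicity): a bijection between submultisets of `C` and `D` moving every dot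
by at most `δ` in the `L∞`-distance, all unmatched dots being `δ`-close to the diagonal. -/
def BottleneckMatch (δ : ℝ) (C D : Multiset (ℝ × EReal)) : Prop :=
  ∃ R : Multiset ((ℝ × EReal) × (ℝ × EReal)),
    R.map Prod.fst ≤ C ∧ R.map Prod.snd ≤ D ∧
    (∀ pq ∈ R, closeDot δ pq.1 pq.2) ∧
    (∀ p ∈ C - R.map Prod.fst, nearDiag δ p) ∧
    (∀ q ∈ D - R.map Prod.snd, nearDiag δ q)

/-- The bottleneck distance between two diagrams. -/
noncomputable def bottleneckDist (C D : Multiset (ℝ × EReal)) : ℝ :=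
  sInf {δ : ℝ | 0 ≤ δ ∧ BottleneckMatch δ C D}

/-!
Put `r = hausdorffDist A B` and choose maps `f : A → B`, `g : B → A` moving points by at most
`r`. A chain of `A` at scale `s` is carried by `f` to a chain of `B` at scale `s + r`, so a merge
set `C` of `A` born at `p` determines the block of `B` at scale `p + r` containing `f '' C`, its
transfer. Comparing clusters through `f` and `g` shows that birth and death of the transfer are
within `r` of those of `C`, and that if `C` lives longer than `2 r` then `g` transfers its
transfer back to `C`. Matching every long merge set, of `A` or of `B`, with its transfer is
therefore an `r`-matching, and the merge sets left unmatched live at most `2 r`, so their dots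
are `r`-close to the diagonal.
-/

open Filter Topology

lemma closeDot.symm {δ : ℝ} {p q : ℝ × EReal} (h : closeDot δ p q) : closeDot δ q p := by
  obtain ⟨h1, ⟨hp, hq⟩ | ⟨a, b, ha, hb, hab⟩⟩ := h
  · exact ⟨abs_sub_comm p.1 q.1 ▸ h1, .inl ⟨hq, hp⟩⟩
  · exact ⟨abs_sub_comm p.1 q.1 ▸ h1, .inr ⟨b, a, hb, ha, abs_sub_comm a b ▸ hab⟩⟩

lemma BottleneckMatch.symm {δ : ℝ} {C D : Multiset (ℝ × EReal)} (h : BottleneckMatch δ C D) :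
    BottleneckMatch δ D C := by
  obtain ⟨R, hC, hD, hR, hC', hD'⟩ := h
  have h1 : (R.map Prod.swap).map Prod.fst = R.map Prod.snd := by simp [Multiset.map_map]
  have h2 : (R.map Prod.swap).map Prod.snd = R.map Prod.fst := by simp [Multiset.map_map]
  refine ⟨R.map Prod.swap, h1 ▸ hD, h2 ▸ hC, ?_, h1 ▸ hD', h2 ▸ hC'⟩
  simp only [Multiset.mem_map, forall_exists_index, and_imp]
  rintro _ pq hpq rfl
  exact (hR pq hpq).symm

lemma closeDot_of_forall_lt {δ : ℝ} {p q : ℝ × EReal} (h1 : |p.1 - q.1| ≤ δ)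
    (hp : p.2 ≠ ⊥) (hq : q.2 ≠ ⊥)
    (hpq : ∀ s : ℝ, (s : EReal) < p.2 → ((s - δ : ℝ) : EReal) < q.2)
    (hqp : ∀ s : ℝ, (s : EReal) < q.2 → ((s - δ : ℝ) : EReal) < p.2) : closeDot δ p q := by
  refine ⟨h1, ?_⟩
  obtain ⟨_, x⟩ := p
  obtain ⟨_, y⟩ := q
  induction x using EReal.rec with
  | bot => exact absurd rfl hp
  | top =>
    induction y using EReal.rec with
    | bot => exact absurd rfl hq
    | top => exact .inl ⟨rfl, rfl⟩
    | coe b => simpa using hpq (b + δ) (EReal.coe_lt_top _)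
  | coe a =>
    induction y using EReal.rec with
    | bot => exact absurd rfl hq
    | top => simpa using hqp (a + δ) (EReal.coe_lt_top _)
    | coe b =>
      have key {a b : ℝ} (h : ∀ s : ℝ, (s : EReal) < a → ((s - δ : ℝ) : EReal) < b) :
          a - b ≤ δ := by
        have : a ≤ b + δ := le_of_forall_lt_imp_le_of_dense fun s hs => by
          linarith [EReal.coe_lt_coe_iff.1 (h s (EReal.coe_lt_coe_iff.2 hs))]
        linarith
      exact .inr ⟨a, b, rfl, rfl, abs_sub_le_iff.2 ⟨key hpq, key hqp⟩⟩

lemma not_bottleneckMatch_zero_right {δ : ℝ} {C : Multiset (ℝ × EReal)}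
    (h : ∃ p ∈ C, p.2 = ⊤) : ¬ BottleneckMatch δ C 0 := by
  rintro ⟨R, -, hR, -, hC, -⟩
  obtain ⟨p, hp, htop⟩ := h
  rw [Multiset.le_zero, Multiset.map_eq_zero] at hR
  obtain ⟨a, ha, -⟩ := hC p (by simpa [hR] using hp)
  exact EReal.coe_ne_top a (ha ▸ htop)

lemma bottleneckDist_le {δ : ℝ} {C D : Multiset (ℝ × EReal)} (hδ : 0 ≤ δ)
    (h : BottleneckMatch δ C D) : bottleneckDist C D ≤ δ :=
  csInf_le ⟨0, fun _ h => h.1⟩ ⟨hδ, h⟩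

lemma Finset.map_val_sub_map_val {α β : Type*} [DecidableEq α] [DecidableEq β] {U I : Finset α}
    (w : α → β) (hI : I ⊆ U) : U.val.map w - I.val.map w = (U \ I).val.map w := by
  rw [← add_tsub_cancel_right ((U \ I).val.map w) (I.val.map w), ← Multiset.map_add,
    Finset.sdiff_val, tsub_add_cancel_of_le (Finset.val_le_iff.2 hI)]

lemma bottleneckMatch_of_injOn {α β : Type*} {δ : ℝ} {S : Finset α} {T : Finset β}
    {u : α → ℝ × EReal} {v : β → ℝ × EReal} {P : Finset (α × β)} (hP : P ⊆ S ×ˢ T)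
    (hfst : Set.InjOn Prod.fst (P : Set (α × β)))
    (hsnd : Set.InjOn Prod.snd (P : Set (α × β)))
    (hclose : ∀ p ∈ P, closeDot δ (u p.1) (v p.2))
    (hS : ∀ a ∈ S, a ∉ P.image Prod.fst → nearDiag δ (u a))
    (hT : ∀ b ∈ T, b ∉ P.image Prod.snd → nearDiag δ (v b)) :
    BottleneckMatch δ (S.val.map u) (T.val.map v) := by
  have hPS : P.image Prod.fst ⊆ S :=
    Finset.image_subset_iff.2 fun p hp => (Finset.mem_product.1 (hP hp)).1
  have hPT : P.image Prod.snd ⊆ T :=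
    Finset.image_subset_iff.2 fun p hp => (Finset.mem_product.1 (hP hp)).2
  set R := P.val.map fun p => (u p.1, v p.2)
  have hR1 : R.map Prod.fst = (P.image Prod.fst).val.map u := by
    rw [Finset.image_val_of_injOn hfst, Multiset.map_map, Multiset.map_map]; rfl
  have hR2 : R.map Prod.snd = (P.image Prod.snd).val.map v := by
    rw [Finset.image_val_of_injOn hsnd, Multiset.map_map, Multiset.map_map]; rfl
  refine ⟨R, ?_, ?_, ?_, ?_, ?_⟩
  · exact hR1 ▸ Multiset.map_le_map (Finset.val_le_iff.2 hPS)
  · exact hR2 ▸ Multiset.map_le_map (Finset.val_le_iff.2 hPT)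
  · simp only [R, Multiset.mem_map, Finset.mem_val, forall_exists_index, and_imp]
    rintro _ p hp rfl
    exact hclose p hp
  · rw [hR1, Finset.map_val_sub_map_val u hPS]
    simp only [Multiset.mem_map, Finset.mem_val, Finset.mem_sdiff, forall_exists_index, and_imp]
    rintro _ a ha hna rfl
    exact hS a ha hna
  · rw [hR2, Finset.map_val_sub_map_val v hPT]
    simp only [Multiset.mem_map, Finset.mem_val, Finset.mem_sdiff, forall_exists_index, and_imp]
    rintro _ b hb hnb rfl
    exact hT b hb hnb

lemma Metric.exists_forall_mem_dist_le_hausdorffDist {α : Type*} [PseudoMetricSpace α]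
    {A B : Set α} (hB : IsCompact B) (h : Metric.hausdorffEDist A B ≠ ⊤) :
    ∃ f : α → α, ∀ a ∈ A, f a ∈ B ∧ dist a (f a) ≤ Metric.hausdorffDist A B := by
  have : ∀ a ∈ A, ∃ b ∈ B, dist a b ≤ Metric.hausdorffDist A B := fun a ha => by
    obtain ⟨b, hb, hd⟩ :=
      hB.exists_infDist_eq_dist (Metric.nonempty_of_hausdorffEDist_ne_top ⟨a, ha⟩ h) a
    exact ⟨b, hb, hd ▸ Metric.infDist_le_hausdorffDist_of_mem ha h⟩
  choose! f hf using this
  exact ⟨f, hf⟩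

section SingleLinkage

variable {A B C : Set X} {s t r : ℝ} {a b x y : X}

lemma slRel_symm_s13 (h : slRel A s a b) : slRel A s b a :=
  Relation.ReflTransGen.mono (fun _ _ h => ⟨h.2.1, h.1, (dist_comm _ _).le.trans h.2.2⟩) _ _
    h.swap

lemma slRel_of_dist_le (ha : a ∈ A) (hb : b ∈ A) (h : dist a b ≤ 2 * s) : slRel A s a b :=
  .single ⟨ha, hb, h⟩

lemma slRel_of_imp (himp : ∀ x ∈ A, ∀ y ∈ A, dist x y ≤ 2 * s → dist x y ≤ 2 * t)
    (h : slRel A s a b) : slRel A t a b :=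
  Relation.ReflTransGen.mono (fun x y hxy => ⟨hxy.1, hxy.2.1, himp x hxy.1 y hxy.2.1 hxy.2.2⟩)
    _ _ h

lemma slRel_mono (hst : s ≤ t) (h : slRel A s a b) : slRel A t a b :=
  slRel_of_imp (fun _ _ _ _ hd => hd.trans (by linarith)) h

/-- Right continuity of the dendrogram: only finitely many distances of `A` exceed `2 * s`. -/
lemma exists_gt_slRel_imp (hA : A.Finite) (s : ℝ) :
    ∃ t > s, ∀ a b, slRel A t a b → slRel A s a b := by
  have hpair : ∀ q ∈ A ×ˢ A, ∀ᶠ t in 𝓝[>] s, dist q.1 q.2 ≤ 2 * t → dist q.1 q.2 ≤ 2 * s := by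
    intro q _
    rcases le_or_gt (dist q.1 q.2) (2 * s) with hle | hlt
    · exact .of_forall fun _ _ => hle
    · have : ∀ᶠ t in 𝓝 s, 2 * t < dist q.1 q.2 :=
        (continuous_const.mul continuous_id).continuousAt.eventually_lt continuousAt_const hlt
      exact (eventually_nhdsWithin_of_eventually_nhds this).mono fun t ht hd =>
        absurd hd (not_le.2 ht)
  obtain ⟨t, hts, ht⟩ :=
    (eventually_mem_nhdsWithin.and ((hA.prod hA).eventually_all.2 hpair)).exists
  exact ⟨t, hts, fun a b => slRel_of_imp fun x hx y hy => ht (x, y) ⟨hx, hy⟩⟩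

lemma mem_slCluster_self (ha : a ∈ A) : a ∈ slCluster A s a := ⟨ha, .refl⟩

lemma slCluster_mono (hst : s ≤ t) : slCluster A s a ⊆ slCluster A t a :=
  fun _ hx => ⟨hx.1, slRel_mono hst hx.2⟩

lemma slCluster_eq_of_slRel (h : slRel A s a b) : slCluster A s a = slCluster A s b :=
  Set.ext fun _ => and_congr_right fun _ => ⟨(slRel_symm_s13 h).trans, h.trans⟩

lemma mem_slPartition_iff (hCA : C ⊆ A) (ha : a ∈ C) :
    C ∈ slPartition A s ↔ slCluster A s a = C := by
  refine ⟨?_, fun h => ⟨a, hCA ha, h.symm⟩⟩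
  rintro ⟨c, -, rfl⟩
  exact (slCluster_eq_of_slRel ha.2).symm

lemma slCluster_eq_self (hA : A.Finite) (ha : a ∈ A) (hs : Metric.diam A ≤ 2 * s) :
    slCluster A s a = A :=
  Set.Subset.antisymm (fun _ hx => hx.1) fun _ hx =>
    ⟨hx, slRel_of_dist_le ha hx ((Metric.dist_le_diam_of_mem hA.isBounded ha hx).trans hs)⟩

def slScales (A C : Set X) : Set ℝ := {s | 0 ≤ s ∧ C ∈ slPartition A s}

lemma subset_of_mem_slBlocks (hC : C ∈ slBlocks A) : C ⊆ A := by
  obtain ⟨s, -, c, -, rfl⟩ := hC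
  exact fun _ hx => hx.1

lemma nonempty_of_mem_slBlocks (hC : C ∈ slBlocks A) : C.Nonempty := by
  obtain ⟨s, -, c, hc, rfl⟩ := hC
  exact ⟨c, mem_slCluster_self hc⟩

lemma slBirth_le (hs : s ∈ slScales A C) : slBirth A C ≤ s :=
  csInf_le ⟨0, fun _ h => h.1⟩ hs

lemma coe_le_slDeath (hs : s ∈ slScales A C) : (s : EReal) ≤ slDeath A C :=
  le_sSup (Set.mem_image_of_mem _ hs)

lemma slBirth_mem_slScales (hA : A.Finite) (hC : C ∈ slBlocks A) :
    slBirth A C ∈ slScales A C := by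
  obtain ⟨s, hs⟩ := hC
  obtain ⟨t, hpt, ht⟩ := exists_gt_slRel_imp hA (slBirth A C)
  obtain ⟨u, hu, hut⟩ := exists_lt_of_csInf_lt ⟨s, hs⟩ hpt
  refine ⟨le_csInf ⟨s, hs⟩ fun _ h => h.1, ?_⟩
  obtain ⟨c, hc, rfl⟩ := hu.2
  refine ⟨c, hc, Set.Subset.antisymm (fun x hx => ⟨hx.1, ht c x (slRel_mono hut.le hx.2)⟩) ?_⟩
  exact slCluster_mono (slBirth_le hu)

section Block

variable (hA : A.Finite) (hC : C ∈ slBlocks A) (ha : a ∈ C)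
include hA hC

lemma slBirth_nonneg : 0 ≤ slBirth A C := (slBirth_mem_slScales hA hC).1

lemma slDeath_ne_bot : slDeath A C ≠ ⊥ :=
  ne_bot_of_le_ne_bot (EReal.coe_ne_bot _) (coe_le_slDeath (slBirth_mem_slScales hA hC))

include ha

lemma slCluster_slBirth : slCluster A (slBirth A C) a = C :=
  (mem_slPartition_iff (subset_of_mem_slBlocks hC) ha).1 (slBirth_mem_slScales hA hC).2

lemma slBirth_le_iff (hs : 0 ≤ s) : slBirth A C ≤ s ↔ C ⊆ slCluster A s a := by
  refine ⟨fun h => slCluster_slBirth hA hC ha ▸ slCluster_mono h, fun h => ?_⟩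
  by_contra! hlt
  have hsC : slCluster A s a = C := Set.Subset.antisymm
    (slCluster_slBirth hA hC ha ▸ slCluster_mono hlt.le) h
  exact hlt.not_ge (slBirth_le ⟨hs, (mem_slPartition_iff (subset_of_mem_slBlocks hC) ha).2 hsC⟩)

lemma coe_lt_slDeath_iff : (s : EReal) < slDeath A C ↔ slCluster A s a ⊆ C := by
  have hCA := subset_of_mem_slBlocks hC
  constructor
  · intro h
    obtain ⟨_, ⟨t, ht, rfl⟩, hst⟩ := lt_sSup_iff.1 h
    exact (mem_slPartition_iff hCA ha).1 ht.2 ▸ slCluster_mono (EReal.coe_lt_coe_iff.1 hst).le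
  · intro h
    have hp := slBirth_mem_slScales hA hC
    rcases lt_or_ge s (slBirth A C) with hsp | hps
    · exact (EReal.coe_lt_coe_iff.2 hsp).trans_le (coe_le_slDeath hp)
    obtain ⟨t, hst, ht⟩ := exists_gt_slRel_imp hA s
    have htC : slCluster A t a = C := Set.Subset.antisymm
      (fun x hx => h ⟨hx.1, ht a x hx.2⟩)
      (slCluster_slBirth hA hC ha ▸ slCluster_mono (hps.trans hst.le))
    refine (EReal.coe_lt_coe_iff.2 hst).trans_le (coe_le_slDeath ⟨?_, ?_⟩)
    · linarith [hp.1]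
    · exact (mem_slPartition_iff hCA ha).2 htC

end Block

lemma mem_slBlocks_self (hA : A.Finite) (hne : A.Nonempty) : A ∈ slBlocks A := by
  obtain ⟨a, ha⟩ := hne
  refine ⟨Metric.diam A / 2, by linarith [Metric.diam_nonneg (s := A)], a, ha, ?_⟩
  exact (slCluster_eq_self hA ha (by linarith)).symm

lemma slDeath_self (hA : A.Finite) (hne : A.Nonempty) : slDeath A A = ⊤ := by
  obtain ⟨a, ha⟩ := hne
  refine (EReal.eq_top_iff_forall_lt _).2 fun s => ?_
  exact (coe_lt_slDeath_iff hA (mem_slBlocks_self hA ⟨a, ha⟩) ha).2 fun _ hx => hx.1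

noncomputable def slDot (A C : Set X) : ℝ × EReal := (slBirth A C, slDeath A C)

lemma mergegram_eq_map (hA : A.Finite) :
    mergegram A hA = (slBlocks_finite hA).toFinset.val.map (slDot A) := rfl

lemma mergegram_empty (h : (∅ : Set X).Finite) : mergegram ∅ h = 0 := by
  have : slBlocks (∅ : Set X) = ∅ :=
    Set.eq_empty_of_forall_notMem fun _ hC => (nonempty_of_mem_slBlocks hC).ne_empty
      (Set.subset_empty_iff.1 (subset_of_mem_slBlocks hC))
  simp [mergegram_eq_map, this]

lemma exists_mem_mergegram_eq_top (hA : A.Finite) (hne : A.Nonempty) :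
    ∃ p ∈ mergegram A hA, p.2 = ⊤ :=
  ⟨slDot A A, Multiset.mem_map_of_mem _ (by simpa using mem_slBlocks_self hA hne),
    slDeath_self hA hne⟩

def slLong (r : ℝ) (A C : Set X) : Prop := ((slBirth A C + 2 * r : ℝ) : EReal) < slDeath A C

lemma nearDiag_of_not_slLong (hA : A.Finite) (hC : C ∈ slBlocks A) (h : ¬ slLong r A C) :
    nearDiag r (slDot A C) := by
  have hle : slDeath A C ≤ ((slBirth A C + 2 * r : ℝ) : EReal) := not_lt.1 h
  have hge : (slBirth A C : EReal) ≤ slDeath A C := coe_le_slDeath (slBirth_mem_slScales hA hC)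
  obtain ⟨d, hd⟩ : ∃ d : ℝ, slDeath A C = d :=
    ⟨_, (EReal.coe_toReal (ne_top_of_le_ne_top (EReal.coe_ne_top _) hle)
      (slDeath_ne_bot hA hC)).symm⟩
  rw [hd, EReal.coe_le_coe_iff] at hle hge
  refine ⟨d, hd, ?_⟩
  rw [slDot, abs_of_nonneg (sub_nonneg.2 hge)]
  linarith

lemma slRel_slBirth_of_mem (hA : A.Finite) (hC : C ∈ slBlocks A) (ha : a ∈ C) (hx : x ∈ C) :
    slRel A (slBirth A C) a x :=
  ((slCluster_slBirth hA hC ha).symm ▸ hx : x ∈ slCluster A (slBirth A C) a).2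

section Transfer

variable {f g : X → X}

lemma slRel_map (hf : ∀ a ∈ A, f a ∈ B ∧ dist a (f a) ≤ r) (h : slRel A s x y) :
    slRel B (s + r) (f x) (f y) := by
  induction h with
  | refl => exact .refl
  | @tail y z _ hyz ih =>
    refine ih.tail ⟨(hf y hyz.1).1, (hf z hyz.2.1).1, ?_⟩
    calc dist (f y) (f z) ≤ dist y (f y) + dist y z + dist z (f z) := by
          linarith [dist_triangle4 (f y) y z (f z), dist_comm (f y) y]
      _ ≤ 2 * (s + r) := by linarith [(hf y hyz.1).2, (hf z hyz.2.1).2, hyz.2.2]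

/-- For a merge set `C` of `A`, this is the block of `B` at scale `slBirth A C + r` containing
`f '' C` (`slTransfer_eq`). -/
def slTransfer (f : X → X) (r : ℝ) (A B C : Set X) : Set X :=
  ⋃ a ∈ C, slCluster B (slBirth A C + r) (f a)

variable (hf : ∀ a ∈ A, f a ∈ B ∧ dist a (f a) ≤ r)
include hf

lemma slTransfer_eq (hA : A.Finite) (hC : C ∈ slBlocks A) (ha : a ∈ C) :
    slTransfer f r A B C = slCluster B (slBirth A C + r) (f a) := by
  refine Set.Subset.antisymm (Set.iUnion₂_subset fun c hc => ?_) fun _ hx => Set.mem_biUnion ha hx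
  exact (slCluster_eq_of_slRel (slRel_map hf (slRel_slBirth_of_mem hA hC ha hc))).symm.le

lemma mem_slTransfer (hC : C ∈ slBlocks A) (ha : a ∈ C) :
    f a ∈ slTransfer f r A B C :=
  Set.mem_biUnion ha (mem_slCluster_self (hf a (subset_of_mem_slBlocks hC ha)).1)

lemma slTransfer_mem_slBlocks (hA : A.Finite) (hr : 0 ≤ r) (hC : C ∈ slBlocks A) :
    slTransfer f r A B C ∈ slBlocks B := by
  obtain ⟨a, ha⟩ := nonempty_of_mem_slBlocks hC
  exact ⟨_, by linarith [slBirth_nonneg hA hC], f a,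
    (hf a (subset_of_mem_slBlocks hC ha)).1, slTransfer_eq hf hA hC ha⟩

variable (hg : ∀ b ∈ B, g b ∈ A ∧ dist b (g b) ≤ r)
include hg

lemma slRel_comp_self (ha : a ∈ A) (hs : r ≤ s) : slRel A s a (g (f a)) :=
  slRel_of_dist_le ha (hg _ (hf a ha).1).1 <| by
    linarith [dist_triangle a (f a) (g (f a)), (hf a ha).2, (hg _ (hf a ha).1).2]

lemma slRel_of_slRel_map (ha : a ∈ A) (hs : 0 ≤ s) (h : slRel B s (f a) b) :
    slRel A (s + r) a (g b) :=
  (slRel_comp_self hf hg ha (by linarith)).trans (slRel_map hg h)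

lemma slRel_of_slRel_map_map (ha : a ∈ A) (hx : x ∈ A) (hs : 0 ≤ s)
    (h : slRel B s (f a) (f x)) : slRel A (s + r) a x :=
  (slRel_of_slRel_map hf hg ha hs h).trans (slRel_symm_s13 (slRel_comp_self hf hg hx (by linarith)))

variable (hA : A.Finite) (hB : B.Finite) (hr : 0 ≤ r) (hC : C ∈ slBlocks A)
include hA hB hr hC

lemma abs_slBirth_sub_slBirth_slTransfer_le :
    |slBirth A C - slBirth B (slTransfer f r A B C)| ≤ r := by
  obtain ⟨a, ha⟩ := nonempty_of_mem_slBlocks hC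
  have haA := subset_of_mem_slBlocks hC ha
  have hD := slTransfer_eq hf hA hC ha
  have hDB := slTransfer_mem_slBlocks hf hA hr hC
  have hfa := mem_slTransfer hf hC ha
  have hp := slBirth_nonneg hA hC
  have ht := slBirth_nonneg hB hDB
  have h1 := (slBirth_le_iff hB hDB hfa (by linarith)).2 hD.le
  have h2 : slBirth A C ≤ slBirth B (slTransfer f r A B C) + r := by
    refine (slBirth_le_iff hA hC ha (by linarith)).2 fun x hx => ?_
    have hxA := subset_of_mem_slBlocks hC hx
    have hfx : f x ∈ slTransfer f r A B C :=
      hD ▸ ⟨(hf x hxA).1, slRel_map hf (slRel_slBirth_of_mem hA hC ha hx)⟩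
    exact ⟨hxA, slRel_of_slRel_map_map hf hg haA hxA ht (slRel_slBirth_of_mem hB hDB hfa hfx)⟩
  rw [abs_le]
  constructor <;> linarith

lemma coe_sub_lt_slDeath_slTransfer {s : ℝ} (hs : (s : EReal) < slDeath A C) :
    ((s - r : ℝ) : EReal) < slDeath B (slTransfer f r A B C) := by
  obtain ⟨a, ha⟩ := nonempty_of_mem_slBlocks hC
  have haA := subset_of_mem_slBlocks hC ha
  have hD := slTransfer_eq hf hA hC ha
  have hDB := slTransfer_mem_slBlocks hf hA hr hC
  have hfa := mem_slTransfer hf hC ha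
  have hp := slBirth_nonneg hA hC
  refine (coe_lt_slDeath_iff hB hDB hfa).2 fun y hy => ?_
  rcases le_or_gt (s - r) (slBirth A C + r) with hle | hlt
  · exact hD ▸ slCluster_mono hle hy
  have hgy : g y ∈ C := (coe_lt_slDeath_iff hA hC ha).1 hs
    ⟨(hg y hy.1).1, by simpa using slRel_of_slRel_map hf hg haA (by linarith) hy.2⟩
  exact hD ▸ ⟨hy.1, slRel_symm_s13 (slRel_of_slRel_map hg hf hy.1 hp
    (slRel_symm_s13 (slRel_slBirth_of_mem hA hC ha hgy)))⟩

lemma coe_sub_lt_slDeath_of_lt_slDeath_slTransfer (hlong : slLong r A C) {s : ℝ}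
    (hs : (s : EReal) < slDeath B (slTransfer f r A B C)) :
    ((s - r : ℝ) : EReal) < slDeath A C := by
  obtain ⟨a, ha⟩ := nonempty_of_mem_slBlocks hC
  have haA := subset_of_mem_slBlocks hC ha
  have hD := slTransfer_eq hf hA hC ha
  have hDB := slTransfer_mem_slBlocks hf hA hr hC
  have hfa := mem_slTransfer hf hC ha
  have hp := slBirth_nonneg hA hC
  refine (coe_lt_slDeath_iff hA hC ha).2 fun x hx => ?_
  have hfx := (coe_lt_slDeath_iff hB hDB hfa).1 hs
    ⟨(hf x hx.1).1, by simpa using slRel_map hf hx.2⟩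
  rw [hD] at hfx
  have hax := slRel_of_slRel_map_map hf hg haA hx.1 (by linarith) hfx.2
  exact (coe_lt_slDeath_iff hA hC ha).1 hlong ⟨hx.1, by rwa [two_mul, ← add_assoc]⟩

lemma closeDot_slTransfer (hlong : slLong r A C) :
    closeDot r (slDot A C) (slDot B (slTransfer f r A B C)) :=
  closeDot_of_forall_lt (abs_slBirth_sub_slBirth_slTransfer_le hf hg hA hB hr hC)
    (slDeath_ne_bot hA hC) (slDeath_ne_bot hB (slTransfer_mem_slBlocks hf hA hr hC))
    (fun _ => coe_sub_lt_slDeath_slTransfer hf hg hA hB hr hC)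
    (fun _ => coe_sub_lt_slDeath_of_lt_slDeath_slTransfer hf hg hA hB hr hC hlong)

lemma slTransfer_slTransfer (hlong : slLong r A C) :
    slTransfer g r B A (slTransfer f r A B C) = C := by
  obtain ⟨a, ha⟩ := nonempty_of_mem_slBlocks hC
  have haA := subset_of_mem_slBlocks hC ha
  have hD := slTransfer_eq hf hA hC ha
  have hDB := slTransfer_mem_slBlocks hf hA hr hC
  have hfa := mem_slTransfer hf hC ha
  have ht := slBirth_nonneg hB hDB
  have hbirth := abs_le.1 (abs_slBirth_sub_slBirth_slTransfer_le hf hg hA hB hr hC)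
  rw [slTransfer_eq hg hB hDB hfa,
    ← slCluster_eq_of_slRel (slRel_comp_self hf hg haA (by linarith))]
  refine Set.Subset.antisymm ?_ ((slBirth_le_iff hA hC ha (by linarith)).1 (by linarith))
  exact (slCluster_mono (by linarith)).trans ((coe_lt_slDeath_iff hA hC ha).1 hlong)

end Transfer

lemma bottleneckMatch_mergegram {f g : X → X} (hA : A.Finite) (hB : B.Finite) (hr : 0 ≤ r)
    (hf : ∀ a ∈ A, f a ∈ B ∧ dist a (f a) ≤ r) (hg : ∀ b ∈ B, g b ∈ A ∧ dist b (g b) ≤ r) :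
    BottleneckMatch r (mergegram A hA) (mergegram B hB) := by
  set S := (slBlocks_finite hA).toFinset
  set T := (slBlocks_finite hB).toFinset
  set P := (S ×ˢ T).filter fun CD => (slLong r A CD.1 ∨ slLong r B CD.2) ∧
    slTransfer f r A B CD.1 = CD.2 ∧ slTransfer g r B A CD.2 = CD.1
  have hP {C D} : (C, D) ∈ P ↔ C ∈ slBlocks A ∧ D ∈ slBlocks B ∧
      (slLong r A C ∨ slLong r B D) ∧ slTransfer f r A B C = D ∧ slTransfer g r B A D = C := by
    simp [P, S, T, and_assoc]
  rw [mergegram_eq_map, mergegram_eq_map]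
  refine bottleneckMatch_of_injOn (P := P) (Finset.filter_subset _ _) ?_ ?_ ?_ ?_ ?_
  · rintro ⟨C, D⟩ hCD ⟨C', D'⟩ hCD' (rfl : C = C')
    rw [← (hP.1 hCD).2.2.2.1, ← (hP.1 hCD').2.2.2.1]
  · rintro ⟨C, D⟩ hCD ⟨C', D'⟩ hCD' (rfl : D = D')
    rw [← (hP.1 hCD).2.2.2.2, ← (hP.1 hCD').2.2.2.2]
  · rintro ⟨C, D⟩ hCD
    obtain ⟨hC, hD, hlong | hlong, hCD, hDC⟩ := hP.1 hCD
    · exact hCD ▸ closeDot_slTransfer hf hg hA hB hr hC hlong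
    · exact hDC ▸ (closeDot_slTransfer hg hf hB hA hr hD hlong).symm
  · intro C hC hCP
    rw [Set.Finite.mem_toFinset] at hC
    refine nearDiag_of_not_slLong hA hC fun hlong => hCP ?_
    refine Finset.mem_image.2 ⟨(C, slTransfer f r A B C), hP.2 ?_, rfl⟩
    exact ⟨hC, slTransfer_mem_slBlocks hf hA hr hC, .inl hlong, rfl,
      slTransfer_slTransfer hf hg hA hB hr hC hlong⟩
  · intro D hD hDP
    rw [Set.Finite.mem_toFinset] at hD
    refine nearDiag_of_not_slLong hB hD fun hlong => hDP ?_
    refine Finset.mem_image.2 ⟨(slTransfer g r B A D, D), hP.2 ?_, rfl⟩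
    exact ⟨slTransfer_mem_slBlocks hg hB hr hD, hD, .inr hlong,
      slTransfer_slTransfer hg hf hB hA hr hD hlong, rfl⟩

end SingleLinkage

/-- Theorem (stability of the mergegram).  For any finite subsets `A, B` of a metric
space, the bottleneck distance between the mergegrams of their single-linkage
dendrograms is at most the Hausdorff distance between `A` and `B`. -/
theorem mergegram_stability (A B : Set X) (hA : A.Finite) (hB : B.Finite) :
    bottleneckDist (mergegram A hA) (mergegram B hB) ≤ Metric.hausdorffDist A B := by
  by_cases hE : Metric.hausdorffEDist A B = ⊤
  · -- One of `A`, `B` is empty and the other is not: no matching exists, and both sides are `0`.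
    suffices ∀ δ, ¬ BottleneckMatch δ (mergegram A hA) (mergegram B hB) by
      simp [bottleneckDist, this, Metric.hausdorffDist_nonneg]
    rcases A.eq_empty_or_nonempty with rfl | hAne
    · have hBne : B.Nonempty := Set.nonempty_iff_ne_empty.2 fun hB0 => by
        simp [hB0, Metric.hausdorffEDist_self] at hE
      rw [mergegram_empty]
      exact fun δ h =>
        not_bottleneckMatch_zero_right (exists_mem_mergegram_eq_top hB hBne) h.symm
    · obtain rfl : B = ∅ := Set.not_nonempty_iff_eq_empty.1 fun hBne =>
        Metric.hausdorffEDist_ne_top_of_nonempty_of_bounded hAne hBne hA.isBounded hB.isBounded hE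
      rw [mergegram_empty]
      exact fun δ => not_bottleneckMatch_zero_right (exists_mem_mergegram_eq_top hA hAne)
  · obtain ⟨f, hf⟩ := Metric.exists_forall_mem_dist_le_hausdorffDist hB.isCompact hE
    obtain ⟨g, hg⟩ := Metric.exists_forall_mem_dist_le_hausdorffDist hA.isCompact
      (by rwa [Metric.hausdorffEDist_comm])
    rw [Metric.hausdorffDist_comm] at hg
    exact bottleneckDist_le Metric.hausdorffDist_nonneg
      (bottleneckMatch_mergegram hA hB Metric.hausdorffDist_nonneg hf hg)
end

section
/- The mergegram of the single-linkage dendrogram is an isometry invariant: if g : X → X' is an isometry between metric spaces (more generally a distance-preserving map) and A ⊂ X is finite, then Δ_SL(g(A); s) = {g(B) : B ∈ Δ_SL(A; s)} for every scale s ≥ 0, and consequently MG(Δ_SL(g(A))) = MG(Δ_SL(A)) as multisets of dots. -/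
/-!
A distance-preserving map is injective and turns `2s`-chains in `A` into `2s`-chains in `g(A)`
and back, so it maps each single-linkage cluster onto a cluster. Hence every block `B` of `A`
is a block of `A` at exactly the same scales as `g(B)` is a block of `g(A)`, which fixes
its birth and death.
-/

open Classical

variable {X : Type*} [MetricSpace X]

attribute [local instance] Classical.propDecidable

section Isometry

variable {X' : Type*} [MetricSpace X'] {g : X → X'}

theorem Isometry.slRel_image_iff (hg : Isometry g) {A : Set X} {s : ℝ} {a b : X} :
    slRel (g '' A) s (g a) (g b) ↔ slRel A s a b := by
  constructor
  · suffices ∀ y, slRel (g '' A) s (g a) y → ∀ b, y = g b → slRel A s a b from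
      fun h => this _ h b rfl
    intro y h
    induction h with
    | refl => intro b hb; rw [hg.injective hb]; exact .refl
    | tail _ step ih =>
      rintro b rfl
      obtain ⟨⟨c, hc, rfl⟩, hb, hdist⟩ := step
      rw [hg.dist_eq] at hdist
      exact (ih c rfl).tail ⟨hc, hg.injective.mem_set_image.1 hb, hdist⟩
  · exact fun h => h.lift g fun x y ⟨hx, hy, hdist⟩ =>
      ⟨Set.mem_image_of_mem g hx, Set.mem_image_of_mem g hy, (hg.dist_eq x y).trans_le hdist⟩

theorem Isometry.slCluster_image (hg : Isometry g) (A : Set X) (s : ℝ) (a : X) :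
    slCluster (g '' A) s (g a) = g '' slCluster A s a := by
  ext y
  constructor
  · rintro ⟨⟨b, hb, rfl⟩, h⟩
    exact ⟨b, ⟨hb, hg.slRel_image_iff.1 h⟩, rfl⟩
  · rintro ⟨b, ⟨hb, h⟩, rfl⟩
    exact ⟨Set.mem_image_of_mem g hb, hg.slRel_image_iff.2 h⟩

theorem Isometry.slPartition_image (hg : Isometry g) (A : Set X) (s : ℝ) :
    slPartition (g '' A) s = Set.image g '' slPartition A s := by
  ext C
  constructor
  · rintro ⟨_, ⟨a, ha, rfl⟩, rfl⟩
    exact ⟨slCluster A s a, ⟨a, ha, rfl⟩, (hg.slCluster_image A s a).symm⟩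
  · rintro ⟨_, ⟨a, ha, rfl⟩, rfl⟩
    exact ⟨g a, Set.mem_image_of_mem g ha, (hg.slCluster_image A s a).symm⟩

theorem Isometry.image_mem_slPartition_image_iff (hg : Isometry g) {A B : Set X} {s : ℝ} :
    g '' B ∈ slPartition (g '' A) s ↔ B ∈ slPartition A s := by
  rw [hg.slPartition_image]
  exact (Set.image_injective.mpr hg.injective).mem_set_image

theorem Isometry.slBlocks_image (hg : Isometry g) (A : Set X) :
    slBlocks (g '' A) = Set.image g '' slBlocks A := by
  ext C
  constructor
  · rintro ⟨s, hs, hC⟩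
    rw [hg.slPartition_image] at hC
    obtain ⟨B, hB, rfl⟩ := hC
    exact ⟨B, ⟨s, hs, hB⟩, rfl⟩
  · rintro ⟨B, ⟨s, hs, hB⟩, rfl⟩
    exact ⟨s, hs, hg.image_mem_slPartition_image_iff.2 hB⟩

theorem Isometry.slBirth_image (hg : Isometry g) (A B : Set X) :
    slBirth (g '' A) (g '' B) = slBirth A B := by
  simp only [slBirth, hg.image_mem_slPartition_image_iff]

theorem Isometry.slDeath_image (hg : Isometry g) (A B : Set X) :
    slDeath (g '' A) (g '' B) = slDeath A B := by
  simp only [slDeath, hg.image_mem_slPartition_image_iff]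

theorem Isometry.mergegram_image (hg : Isometry g) {A : Set X} (hA : A.Finite) :
    mergegram (g '' A) (hA.image g) = mergegram A hA := by
  have hblocks : (slBlocks_finite (hA.image g)).toFinset =
      (slBlocks_finite hA).toFinset.map
        ⟨Set.image g, Set.image_injective.mpr hg.injective⟩ := by
    ext C
    simp only [Set.Finite.mem_toFinset, Finset.mem_map, Function.Embedding.coeFn_mk,
      hg.slBlocks_image, Set.mem_image]
  simp only [mergegram, hblocks, Finset.map_val, Multiset.map_map, Function.comp_def,
    Function.Embedding.coeFn_mk, hg.slBirth_image, hg.slDeath_image]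

end Isometry

/-- The mergegram of the single-linkage dendrogram is an isometry invariant: a
distance-preserving map `g` carries the single-linkage partition of `A` at every scale
to the single-linkage partition of `g(A)`, and the mergegrams of `A` and `g(A)` coincide
as multisets of dots. -/
theorem mergegram_isometry_invariant {X' : Type*} [MetricSpace X'] (g : X → X')
    (hg : Isometry g) (A : Set X) (hA : A.Finite) :
    (∀ s : ℝ, 0 ≤ s → slPartition (g '' A) s = (Set.image g) '' slPartition A s) ∧
    mergegram (g '' A) (hA.image g) = mergegram A hA :=
  ⟨fun s _ => hg.slPartition_image A s, hg.mergegram_image hA⟩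
end
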